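/- Given a Kauffman datum (X, c, e, σ, σ̄, δ, δ̄) in a k-linear monoidal category C, for every n ∈ ℕ the following identities hold in Hom(X ⊗ X, X ⊗ X): σ ∘ (δ^n ⊗ id_X) − (id_X ⊗ δ^n) ∘ σ̄ = z·(Σ_{r=0}^{n} (δ^r ⊗ δ^{n−r}) − Σ_{r=0}^{n} (id_X ⊗ δ^{n−r}) ∘ c ∘ e ∘ (δ^r ⊗ id_X)), and σ ∘ (id_X ⊗ δ̄^n) − (δ̄^n ⊗ id_X) ∘ σ̄ = z·(Σ_{r=0}^{n} (δ̄^r ⊗ δ̄^{n−r}) − Σ_{r=0}^{n} (δ̄^r ⊗ id_X) ∘ c ∘ e ∘ (id_X ⊗ δ̄^{n−r})). -/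

import Mathlib

open CategoryTheory CategoryTheory.MonoidalCategory

universe v u

/-- A Kauffman datum in a `k`-linear monoidal category: an object `X` together with
cup, cap, mutually inverse positive/negative crossings and mutually inverse dot and
inverse dot, satisfying the defining relations of the affine Kauffman category
`AK(z,t)` (with unitors and associators written explicitly). -/
structure KauffmanDatum (k : Type*) [CommRing k] (z t : k) [Invertible z] [Invertible t]
    (C : Type u) [Category.{v} C] [MonoidalCategory C]
    [Preadditive C] [Linear k C] [MonoidalPreadditive C] [MonoidalLinear k C] where
  X : C
  cup : 𝟙_ C ⟶ X ⊗ X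
  cap : X ⊗ X ⟶ 𝟙_ C
  pos : X ⊗ X ⟶ X ⊗ X
  neg : X ⊗ X ⟶ X ⊗ X
  dot : X ⟶ X
  dotInv : X ⟶ X
  pos_neg : pos ≫ neg = 𝟙 (X ⊗ X)
  neg_pos : neg ≫ pos = 𝟙 (X ⊗ X)
  dot_dotInv : dot ≫ dotInv = 𝟙 X
  dotInv_dot : dotInv ≫ dot = 𝟙 X
  braid : (pos ▷ X) ≫ (α_ X X X).hom ≫ (X ◁ pos) ≫ (α_ X X X).inv ≫ (pos ▷ X) =
    (α_ X X X).hom ≫ (X ◁ pos) ≫ (α_ X X X).inv ≫ (pos ▷ X) ≫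
      (α_ X X X).hom ≫ (X ◁ pos) ≫ (α_ X X X).inv
  zig : (ρ_ X).inv ≫ (X ◁ cup) ≫ (α_ X X X).inv ≫ (cap ▷ X) ≫ (λ_ X).hom = 𝟙 X
  zag : (λ_ X).inv ≫ (cup ▷ X) ≫ (α_ X X X).hom ≫ (X ◁ cap) ≫ (ρ_ X).hom = 𝟙 X
  neg_cap : neg ≫ cap = t • cap
  cap_slide : (neg ▷ X) ≫ (α_ X X X).hom ≫ (X ◁ cap) ≫ (ρ_ X).hom =
    (α_ X X X).hom ≫ (X ◁ pos) ≫ (α_ X X X).inv ≫ (cap ▷ X) ≫ (λ_ X).hom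
  skein : pos - neg = z • (𝟙 (X ⊗ X) - cap ≫ cup)
  bubble : cup ≫ cap = (⅟z * (t - ⅟t) + 1) • 𝟙 (𝟙_ C)
  dot_slide : (dot ▷ X) ≫ neg = pos ≫ (X ◁ dot)
  dot_cap : (dot ▷ X) ≫ cap = (X ◁ dotInv) ≫ cap

namespace KauffmanDatum

variable {k : Type*} [CommRing k] {z t : k} [Invertible z] [Invertible t]
  {C : Type u} [Category.{v} C] [MonoidalCategory C]
  [Preadditive C] [Linear k C] [MonoidalPreadditive C] [MonoidalLinear k C]

variable (D : KauffmanDatum k z t C)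

/-- The `n`-fold composite of the dot. -/
def dpow : ℕ → (D.X ⟶ D.X)
  | 0 => 𝟙 D.X
  | n + 1 => dpow n ≫ D.dot

/-- The `n`-fold composite of the inverse dot. -/
def dpowInv : ℕ → (D.X ⟶ D.X)
  | 0 => 𝟙 D.X
  | n + 1 => dpowInv n ≫ D.dotInv

/-- The `n`-th power of the (invertible) dot, for `n ∈ ℤ`. -/
def zdpow : ℤ → (D.X ⟶ D.X)
  | Int.ofNat n => D.dpow n
  | Int.negSucc n => D.dpowInv (n + 1)

/-- The `n`-dotted bubble `β_n = e ∘ (id_X ⊗ δ^n) ∘ c ∈ End(𝟙)`, for `n ∈ ℤ`. -/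
def zbub (n : ℤ) : 𝟙_ C ⟶ 𝟙_ C := D.cup ≫ (D.X ◁ D.zdpow n) ≫ D.cap

lemma slideB : D.pos ≫ (D.dotInv ▷ D.X) = (D.X ◁ D.dotInv) ≫ D.neg := by
  have h : D.pos ≫ (D.dotInv ▷ D.X) =
      (D.pos ≫ (D.dotInv ▷ D.X)) ≫ D.pos ≫ (D.X ◁ D.dot) ≫ (D.X ◁ D.dotInv) ≫ D.neg := by
    have : (D.X ◁ D.dot) ≫ (D.X ◁ D.dotInv) = 𝟙 _ := by
      rw [← MonoidalCategory.whiskerLeft_comp, D.dot_dotInv, MonoidalCategory.whiskerLeft_id]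
    rw [reassoc_of% this, D.pos_neg, Category.comp_id]
  rw [h, ← Category.assoc D.pos (D.X ◁ D.dot), ← D.dot_slide]
  have h2 : (D.dotInv ▷ D.X) ≫ (D.dot ▷ D.X) = 𝟙 _ := by
    rw [← MonoidalCategory.comp_whiskerRight, D.dotInv_dot, MonoidalCategory.id_whiskerRight]
  slice_lhs 2 3 => rw [h2]
  simp only [Category.comp_id, Category.id_comp, Category.assoc]
  rw [reassoc_of% D.pos_neg]

lemma keyA : (D.dot ▷ D.X) ≫ D.pos = D.pos ≫ (D.X ◁ D.dot)
    + z • (D.dot ▷ D.X) - z • ((D.dot ▷ D.X) ≫ D.cap ≫ D.cup) := by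
  have h : (D.dot ▷ D.X) ≫ (D.pos - D.neg) =
      (D.dot ▷ D.X) ≫ (z • (𝟙 (D.X ⊗ D.X) - D.cap ≫ D.cup)) := by rw [D.skein]
  simp only [Preadditive.comp_sub, Linear.comp_smul, Category.comp_id, Category.assoc] at h
  rw [D.dot_slide, smul_sub] at h
  rw [sub_eq_iff_eq_add] at h
  rw [h]; abel

lemma keyB : (D.X ◁ D.dotInv) ≫ D.pos = D.pos ≫ (D.dotInv ▷ D.X)
    + z • (D.X ◁ D.dotInv) - z • ((D.X ◁ D.dotInv) ≫ D.cap ≫ D.cup) := by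
  have h : (D.X ◁ D.dotInv) ≫ (D.pos - D.neg) =
      (D.X ◁ D.dotInv) ≫ (z • (𝟙 (D.X ⊗ D.X) - D.cap ≫ D.cup)) := by rw [D.skein]
  simp only [Preadditive.comp_sub, Linear.comp_smul, Category.comp_id, Category.assoc] at h
  rw [← D.slideB, smul_sub] at h
  rw [sub_eq_iff_eq_add] at h
  rw [h]; abel

lemma partA (n : ℕ) :
    (D.dpow n ▷ D.X) ≫ D.pos - D.neg ≫ (D.X ◁ D.dpow n) =
      z • ((∑ r ∈ Finset.range (n + 1), (D.dpow r ⊗ₘ D.dpow (n - r))) -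
        ∑ r ∈ Finset.range (n + 1),
          (D.dpow r ▷ D.X) ≫ D.cap ≫ D.cup ≫ (D.X ◁ D.dpow (n - r))) := by
  induction n with
  | zero =>
      simpa [KauffmanDatum.dpow] using D.skein
  | succ n ih =>
      have hdp : D.dpow (n + 1) = D.dpow n ≫ D.dot := rfl
      have e1 : (D.dpow (n + 1) ▷ D.X) ≫ D.pos =
          (D.dpow n ▷ D.X) ≫ D.pos ≫ (D.X ◁ D.dot) + z • (D.dpow (n + 1) ▷ D.X)
            - z • ((D.dpow (n + 1) ▷ D.X) ≫ D.cap ≫ D.cup) := by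
        conv_lhs => rw [hdp, MonoidalCategory.comp_whiskerRight, Category.assoc, D.keyA]
        simp only [Preadditive.comp_add, Preadditive.comp_sub, Linear.comp_smul, hdp,
          MonoidalCategory.comp_whiskerRight, Category.assoc]
      have e2 : D.neg ≫ (D.X ◁ D.dpow (n + 1)) =
          (D.neg ≫ (D.X ◁ D.dpow n)) ≫ (D.X ◁ D.dot) := by
        rw [hdp, MonoidalCategory.whiskerLeft_comp, Category.assoc]
      rw [e1, e2]
      have e3 : (D.dpow n ▷ D.X) ≫ D.pos ≫ (D.X ◁ D.dot) + z • (D.dpow (n + 1) ▷ D.X)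
            - z • ((D.dpow (n + 1) ▷ D.X) ≫ D.cap ≫ D.cup)
            - (D.neg ≫ (D.X ◁ D.dpow n)) ≫ (D.X ◁ D.dot)
          = ((D.dpow n ▷ D.X) ≫ D.pos - D.neg ≫ (D.X ◁ D.dpow n)) ≫ (D.X ◁ D.dot)
            + z • (D.dpow (n + 1) ▷ D.X)
            - z • ((D.dpow (n + 1) ▷ D.X) ≫ D.cap ≫ D.cup) := by
        simp only [Preadditive.sub_comp, Category.assoc]; abel
      rw [e3, ih, Linear.smul_comp, Preadditive.sub_comp, Preadditive.sum_comp, Preadditive.sum_comp]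
      have hs1 : ∀ r ∈ Finset.range (n + 1),
          (D.dpow r ⊗ₘ D.dpow (n - r)) ≫ (D.X ◁ D.dot) = D.dpow r ⊗ₘ D.dpow (n + 1 - r) := by
        intro r hr
        rw [Nat.succ_sub (Nat.lt_succ_iff.mp (Finset.mem_range.mp hr))]
        rw [MonoidalCategory.tensorHom_def, MonoidalCategory.tensorHom_def, Category.assoc,
          ← MonoidalCategory.whiskerLeft_comp]
        rfl
      have hs2 : ∀ r ∈ Finset.range (n + 1),
          ((D.dpow r ▷ D.X) ≫ D.cap ≫ D.cup ≫ (D.X ◁ D.dpow (n - r))) ≫ (D.X ◁ D.dot) =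
            (D.dpow r ▷ D.X) ≫ D.cap ≫ D.cup ≫ (D.X ◁ D.dpow (n + 1 - r)) := by
        intro r hr
        rw [Nat.succ_sub (Nat.lt_succ_iff.mp (Finset.mem_range.mp hr))]
        simp only [Category.assoc, ← MonoidalCategory.whiskerLeft_comp]
        rfl
      rw [Finset.sum_congr rfl hs1, Finset.sum_congr rfl hs2]
      have hr1 : ∑ r ∈ Finset.range (n + 1 + 1), D.dpow r ⊗ₘ D.dpow (n + 1 - r) =
          (∑ r ∈ Finset.range (n + 1), D.dpow r ⊗ₘ D.dpow (n + 1 - r)) +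
            D.dpow (n + 1) ⊗ₘ D.dpow (n + 1 - (n + 1)) := Finset.sum_range_succ _ _
      have hr2 : ∑ r ∈ Finset.range (n + 1 + 1),
            D.dpow r ▷ D.X ≫ D.cap ≫ D.cup ≫ D.X ◁ D.dpow (n + 1 - r) =
          (∑ r ∈ Finset.range (n + 1),
            D.dpow r ▷ D.X ≫ D.cap ≫ D.cup ≫ D.X ◁ D.dpow (n + 1 - r)) +
            D.dpow (n + 1) ▷ D.X ≫ D.cap ≫ D.cup ≫ D.X ◁ D.dpow (n + 1 - (n + 1)) :=
        Finset.sum_range_succ _ _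
      rw [hr1, hr2]
      have h0 : D.dpow (n + 1) ⊗ₘ D.dpow (n + 1 - (n + 1)) = D.dpow (n + 1) ▷ D.X := by
        simp [KauffmanDatum.dpow, MonoidalCategory.tensorHom_def]
      have h0' : (D.dpow (n + 1) ▷ D.X) ≫ D.cap ≫ D.cup ≫ (D.X ◁ D.dpow (n + 1 - (n + 1))) =
          (D.dpow (n + 1) ▷ D.X) ≫ D.cap ≫ D.cup := by
        simp [KauffmanDatum.dpow]
      rw [h0, h0']
      rw [smul_sub, smul_sub, smul_add, smul_add]
      abel

lemma partB (n : ℕ) :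
    (D.X ◁ D.dpowInv n) ≫ D.pos - D.neg ≫ (D.dpowInv n ▷ D.X) =
      z • ((∑ r ∈ Finset.range (n + 1), (D.dpowInv r ⊗ₘ D.dpowInv (n - r))) -
        ∑ r ∈ Finset.range (n + 1),
          (D.X ◁ D.dpowInv (n - r)) ≫ D.cap ≫ D.cup ≫ (D.dpowInv r ▷ D.X)) := by
  induction n with
  | zero =>
      simpa [KauffmanDatum.dpowInv] using D.skein
  | succ n ih =>
      have hdp : D.dpowInv (n + 1) = D.dpowInv n ≫ D.dotInv := rfl
      have e1 : (D.X ◁ D.dpowInv (n + 1)) ≫ D.pos =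
          (D.X ◁ D.dpowInv n) ≫ D.pos ≫ (D.dotInv ▷ D.X) + z • (D.X ◁ D.dpowInv (n + 1))
            - z • ((D.X ◁ D.dpowInv (n + 1)) ≫ D.cap ≫ D.cup) := by
        conv_lhs => rw [hdp, MonoidalCategory.whiskerLeft_comp, Category.assoc, D.keyB]
        simp only [Preadditive.comp_add, Preadditive.comp_sub, Linear.comp_smul, hdp,
          MonoidalCategory.whiskerLeft_comp, Category.assoc]
      have e2 : D.neg ≫ (D.dpowInv (n + 1) ▷ D.X) =
          (D.neg ≫ (D.dpowInv n ▷ D.X)) ≫ (D.dotInv ▷ D.X) := by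
        rw [hdp, MonoidalCategory.comp_whiskerRight, Category.assoc]
      rw [e1, e2]
      have e3 : (D.X ◁ D.dpowInv n) ≫ D.pos ≫ (D.dotInv ▷ D.X) + z • (D.X ◁ D.dpowInv (n + 1))
            - z • ((D.X ◁ D.dpowInv (n + 1)) ≫ D.cap ≫ D.cup)
            - (D.neg ≫ (D.dpowInv n ▷ D.X)) ≫ (D.dotInv ▷ D.X)
          = ((D.X ◁ D.dpowInv n) ≫ D.pos - D.neg ≫ (D.dpowInv n ▷ D.X)) ≫ (D.dotInv ▷ D.X)
            + z • (D.X ◁ D.dpowInv (n + 1))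
            - z • ((D.X ◁ D.dpowInv (n + 1)) ≫ D.cap ≫ D.cup) := by
        simp only [Preadditive.sub_comp, Category.assoc]; abel
      rw [e3, ih, Linear.smul_comp, Preadditive.sub_comp, Preadditive.sum_comp,
        Preadditive.sum_comp]
      have hs1 : ∀ r ∈ Finset.range (n + 1),
          (D.dpowInv r ⊗ₘ D.dpowInv (n - r)) ≫ (D.dotInv ▷ D.X) =
            D.dpowInv (r + 1) ⊗ₘ D.dpowInv (n - r) := by
        intro r _
        rw [MonoidalCategory.tensorHom_def', MonoidalCategory.tensorHom_def', Category.assoc,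
          ← MonoidalCategory.comp_whiskerRight]
        rfl
      have hs2 : ∀ r ∈ Finset.range (n + 1),
          ((D.X ◁ D.dpowInv (n - r)) ≫ D.cap ≫ D.cup ≫ (D.dpowInv r ▷ D.X)) ≫
              (D.dotInv ▷ D.X) =
            (D.X ◁ D.dpowInv (n - r)) ≫ D.cap ≫ D.cup ≫ (D.dpowInv (r + 1) ▷ D.X) := by
        intro r _
        simp only [Category.assoc, ← MonoidalCategory.comp_whiskerRight]
        rfl
      rw [Finset.sum_congr rfl hs1, Finset.sum_congr rfl hs2]
      have hr1 : ∑ r ∈ Finset.range (n + 1 + 1), D.dpowInv r ⊗ₘ D.dpowInv (n + 1 - r) =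
          (∑ r ∈ Finset.range (n + 1), D.dpowInv (r + 1) ⊗ₘ D.dpowInv (n + 1 - (r + 1))) +
            D.dpowInv 0 ⊗ₘ D.dpowInv (n + 1 - 0) := Finset.sum_range_succ' _ _
      have hr2 : ∑ r ∈ Finset.range (n + 1 + 1),
            (D.X ◁ D.dpowInv (n + 1 - r)) ≫ D.cap ≫ D.cup ≫ (D.dpowInv r ▷ D.X) =
          (∑ r ∈ Finset.range (n + 1),
            (D.X ◁ D.dpowInv (n + 1 - (r + 1))) ≫ D.cap ≫ D.cup ≫ (D.dpowInv (r + 1) ▷ D.X)) +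
            (D.X ◁ D.dpowInv (n + 1 - 0)) ≫ D.cap ≫ D.cup ≫ (D.dpowInv 0 ▷ D.X) :=
        Finset.sum_range_succ' _ _
      simp only [Nat.succ_sub_succ_eq_sub, Nat.sub_zero] at hr1 hr2
      rw [hr1, hr2]
      have h0 : D.dpowInv 0 ⊗ₘ D.dpowInv (n + 1) = D.X ◁ D.dpowInv (n + 1) := by
        simp [KauffmanDatum.dpowInv]
      have h0' : (D.X ◁ D.dpowInv (n + 1)) ≫ D.cap ≫ D.cup ≫ (D.dpowInv 0 ▷ D.X) =
          (D.X ◁ D.dpowInv (n + 1)) ≫ D.cap ≫ D.cup := by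
        simp [KauffmanDatum.dpowInv]
      rw [h0, h0']
      rw [smul_sub, smul_sub, smul_add, smul_add]
      abel

end KauffmanDatum

/-- Sliding `n` dots (or inverse dots) through a crossing in the affine Kauffman
category. -/
theorem stmt_15 {k : Type*} [CommRing k] {z t : k} [Invertible z] [Invertible t]
    {C : Type u} [Category.{v} C] [MonoidalCategory C]
    [Preadditive C] [Linear k C] [MonoidalPreadditive C] [MonoidalLinear k C]
    (D : KauffmanDatum k z t C) (n : ℕ) :
    ((D.dpow n ▷ D.X) ≫ D.pos - D.neg ≫ (D.X ◁ D.dpow n) =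
      z • ((∑ r ∈ Finset.range (n + 1), (D.dpow r ⊗ₘ D.dpow (n - r))) -
        ∑ r ∈ Finset.range (n + 1),
          (D.dpow r ▷ D.X) ≫ D.cap ≫ D.cup ≫ (D.X ◁ D.dpow (n - r)))) ∧
    ((D.X ◁ D.dpowInv n) ≫ D.pos - D.neg ≫ (D.dpowInv n ▷ D.X) =
      z • ((∑ r ∈ Finset.range (n + 1), (D.dpowInv r ⊗ₘ D.dpowInv (n - r))) -
        ∑ r ∈ Finset.range (n + 1),
          (D.X ◁ D.dpowInv (n - r)) ≫ D.cap ≫ D.cup ≫ (D.dpowInv r ▷ D.X))) := by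
  exact ⟨D.partA n, D.partB n⟩
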